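/- arXiv:2002.04190 — 2 statements merged into one kernel-verified Lean document; each statement's English description precedes it below -/
import Mathlib

section
/- Let (a_n) be an arithmetic sequence with ratios q_n and x ∈ 𝕋 with canonical representation x = Σ c_n/a_n. If supp(x) is q-divergent and lim_{n ∈ A} c_n/q_n = 0 in ℝ for some A ⊆ supp(x) with d(supp(x) \ A) = 0, then x is a topological s-torsion element of 𝕋. -/
open Filter Topology Set

/-- Upper natural density of a set of naturals. -/
noncomputable def upperDensity (A : Set ℕ) : ℝ :=
  Filter.limsup (fun n => (Nat.card ↥(A ∩ Set.Iio n) : ℝ) / n) Filter.atTop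

/-- `A` has natural density `δ`. -/
def HasDensity (A : Set ℕ) (δ : ℝ) : Prop :=
  Filter.Tendsto (fun n => (Nat.card ↥(A ∩ Set.Iio n) : ℝ) / n) Filter.atTop (nhds δ)

/-- Statistical convergence of a real sequence. -/
def StatTendsto (x : ℕ → ℝ) (ξ : ℝ) : Prop :=
  ∀ ε : ℝ, 0 < ε → HasDensity {n | ε ≤ |x n - ξ|} 0

/-- An arithmetic sequence: `a 0 = 1 < a 1 < a 2 < ⋯` and `a n ∣ a (n+1)`. -/
def IsArithmeticSeq (a : ℕ → ℕ) : Prop :=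
  a 0 = 1 ∧ StrictMono a ∧ ∀ n, a n ∣ a (n + 1)

/-- The ratio `q n = a n / a (n-1)` as a real number. -/
noncomputable def qr (a : ℕ → ℕ) (n : ℕ) : ℝ := (a n : ℝ) / (a (n - 1) : ℝ)

/-- `(c n)` is a canonical representation sequence w.r.t. `(a n)`:
`0 ≤ c n < q n` and `c n < q n - 1` for infinitely many `n`. -/
def IsCanonicalRep (a : ℕ → ℕ) (c : ℕ → ℕ) : Prop :=
  c 0 = 0 ∧ (∀ n, 1 ≤ n → c n < a n / a (n - 1)) ∧
    (∀ N, ∃ n, N ≤ n ∧ 1 ≤ n ∧ c n + 1 < a n / a (n - 1))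

/-- Support of (the canonical representation of) `x`. -/
def suppRep (c : ℕ → ℕ) : Set ℕ := {n | 1 ≤ n ∧ c n ≠ 0}

/-- `supp_q(x) = {n : c n = q n - 1}`. -/
def suppqRep (a c : ℕ → ℕ) : Set ℕ := {n | 1 ≤ n ∧ c n + 1 = a n / a (n - 1)}

/-- A set `S ⊆ ℕ` is `q`-bounded if `(q n)` is bounded on `S`. -/
def QBounded (a : ℕ → ℕ) (S : Set ℕ) : Prop := ∃ M, ∀ n ∈ S, a n / a (n - 1) ≤ M

/-- A set `S ⊆ ℕ` is `q`-divergent if `q n → ∞` along `n ∈ S`. -/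
def QDivergent (a : ℕ → ℕ) (S : Set ℕ) : Prop :=
  Filter.Tendsto (fun n => a n / a (n - 1)) (Filter.atTop ⊓ Filter.principal S) Filter.atTop

/-- Statistical convergence in a topological space, via neighborhoods. -/
def StatNhdTendsto {α : Type*} [TopologicalSpace α] (y : ℕ → α) (ℓ : α) : Prop :=
  ∀ U ∈ nhds ℓ, HasDensity {n | y n ∉ U} 0

/-!
Writing `x = ∑_{k ≤ n} c_k / a_k + t_n`, the finite part is killed by `a_n` because `a_k ∣ a_n`,
so `a_n x ≡ a_n t_n` modulo `1` with `a_n t_n ≥ 0`. If `m` is the first element of `supp(x)`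
after `n`, the digit bound `(c_k + 1) a_{k-1} ≤ a_k` telescopes to
`a_n t_n ≤ (c_m + 1) a_n / a_m`, which is at most `a_n / a_{m-1} ≤ 2^{-(m-1-n)}` and at most
`(c_m + 1) / q_m`. The latter tends to `0` along `A` since `c_m / q_m → 0` and `q_m → ∞`.
Hence, for large `n`, `‖a_n x‖ ≥ ε` forces `m - n ≤ K(ε)` and `m ∉ A`: the exceptional `n` lie in
finitely many translates of `supp(x) \ A`, a set of density zero.
-/

section Density

lemma hasDensity_zero_of_card_le {B : Set ℕ} {f : ℕ → ℝ}
    (hf : Tendsto (fun n => f n / n) atTop (𝓝 0))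
    (hB : ∀ n, (Nat.card ↥(B ∩ Iio n) : ℝ) ≤ f n) : HasDensity B 0 :=
  squeeze_zero (fun n => by positivity) (fun n => by gcongr; exact hB n) hf

lemma HasDensity.zero_mono {B B' : Set ℕ} (h : HasDensity B' 0) (hB : B ⊆ B') :
    HasDensity B 0 :=
  hasDensity_zero_of_card_le h fun n => by
    exact_mod_cast Nat.card_mono ((finite_Iio n).inter_of_right B') (inter_subset_inter_left _ hB)

lemma HasDensity.zero_union {B B' : Set ℕ} (h : HasDensity B 0) (h' : HasDensity B' 0) :
    HasDensity (B ∪ B') 0 := by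
  refine hasDensity_zero_of_card_le
    (f := fun n => (Nat.card ↥(B ∩ Iio n) : ℝ) + Nat.card ↥(B' ∩ Iio n))
    (by simpa only [add_div, add_zero] using h.add h') fun n => ?_
  have hcard : Nat.card ↥((B ∪ B') ∩ Iio n) ≤ Nat.card ↥(B ∩ Iio n) + Nat.card ↥(B' ∩ Iio n) := by
    simp only [Nat.card_coe_set_eq, union_inter_distrib_right]
    exact ncard_union_le _ _
  exact_mod_cast hcard

lemma Set.Finite.hasDensity_zero {B : Set ℕ} (hB : B.Finite) : HasDensity B 0 :=
  hasDensity_zero_of_card_le (f := fun _ => (Nat.card B : ℝ))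
    (tendsto_const_div_atTop_nhds_zero_nat _) fun n => by
    exact_mod_cast Nat.card_mono hB inter_subset_left

lemma hasDensity_zero_biUnion {ι : Type*} (s : Finset ι) {B : ι → Set ℕ}
    (hB : ∀ i ∈ s, HasDensity (B i) 0) : HasDensity (⋃ i ∈ s, B i) 0 := by
  classical
  induction s using Finset.induction_on with
  | empty => simpa using finite_empty.hasDensity_zero
  | insert i s _ ih =>
    rw [Finset.set_biUnion_insert]
    exact (hB i (s.mem_insert_self i)).zero_union (ih fun j hj => hB j (s.mem_insert_of_mem hj))

lemma card_preimage_add_inter_Iio_le (D : Set ℕ) (j n : ℕ) :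
    Nat.card ↥((· + j) ⁻¹' D ∩ Iio n) ≤ Nat.card ↥(D ∩ Iio n) + j := by
  simp only [Nat.card_coe_set_eq]
  have himage : (· + j) '' ((· + j) ⁻¹' D ∩ Iio n) ⊆ D ∩ Iio n ∪ Ico n (n + j) := by
    rintro _ ⟨k, ⟨hkD, hkn⟩, rfl⟩
    by_cases hk : k + j < n
    · exact Or.inl ⟨hkD, hk⟩
    · exact Or.inr ⟨not_lt.mp hk, by simpa using hkn⟩
  calc ((· + j) ⁻¹' D ∩ Iio n).ncard = ((· + j) '' ((· + j) ⁻¹' D ∩ Iio n)).ncard :=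
        (ncard_image_of_injective _ (add_left_injective j)).symm
    _ ≤ (D ∩ Iio n ∪ Ico n (n + j)).ncard :=
        ncard_le_ncard himage (((finite_Iio n).inter_of_right D).union (finite_Ico n _))
    _ ≤ (D ∩ Iio n).ncard + (Ico n (n + j)).ncard := ncard_union_le _ _
    _ = (D ∩ Iio n).ncard + j := by simp

lemma HasDensity.zero_preimage_add {D : Set ℕ} (h : HasDensity D 0) (j : ℕ) :
    HasDensity ((· + j) ⁻¹' D) 0 := by
  refine hasDensity_zero_of_card_le (f := fun n => (Nat.card ↥(D ∩ Iio n) : ℝ) + j)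
    (by simpa only [add_div, add_zero] using h.add (tendsto_const_div_atTop_nhds_zero_nat (j : ℝ)))
    fun n => ?_
  exact_mod_cast card_preimage_add_inter_Iio_le D j n

lemma HasDensity.zero_of_eventually_exists_add_mem {B D : Set ℕ} (hD : HasDensity D 0) (K : ℕ)
    (h : ∀ᶠ n in atTop, n ∈ B → ∃ j ≤ K, n + j ∈ D) : HasDensity B 0 := by
  obtain ⟨N, hN⟩ := eventually_atTop.mp h
  have hB : B ⊆ Iio N ∪ ⋃ j ∈ Finset.range (K + 1), (· + j) ⁻¹' D := by
    intro n hn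
    by_cases hnN : n < N
    · exact Or.inl hnN
    · obtain ⟨j, hjK, hjD⟩ := hN n (not_lt.mp hnN) hn
      exact Or.inr (mem_biUnion (Finset.mem_range.mpr (Nat.lt_succ_of_le hjK)) hjD)
  exact ((finite_Iio N).hasDensity_zero.zero_union
    (hasDensity_zero_biUnion _ fun j _ => hD.zero_preimage_add j)).zero_mono hB

end Density

section Representation

variable {a c : ℕ → ℕ}

lemma IsArithmeticSeq.pos (ha : IsArithmeticSeq a) (n : ℕ) : 0 < a n :=
  lt_of_lt_of_le Nat.one_pos (ha.1 ▸ ha.2.1.monotone n.zero_le)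

lemma IsArithmeticSeq.dvd (ha : IsArithmeticSeq a) {k n : ℕ} (h : k ≤ n) : a k ∣ a n :=
  Nat.le_induction (dvd_refl _) (fun n _ ih => ih.trans (ha.2.2 n)) n h

lemma IsArithmeticSeq.two_mul_le (ha : IsArithmeticSeq a) (n : ℕ) : 2 * a n ≤ a (n + 1) := by
  obtain ⟨t, ht⟩ := ha.2.2 n
  have hlt : a n * 1 < a n * t := by simpa [← ht] using ha.2.1 n.lt_succ_self
  have ht2 : 2 ≤ t := Nat.lt_of_mul_lt_mul_left hlt
  rw [ht, mul_comm]
  exact Nat.mul_le_mul_left _ ht2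

lemma IsArithmeticSeq.two_pow_mul_le (ha : IsArithmeticSeq a) (n k : ℕ) :
    2 ^ k * a n ≤ a (n + k) := by
  induction k with
  | zero => simp
  | succ k ih =>
    calc 2 ^ (k + 1) * a n = 2 * (2 ^ k * a n) := by ring
      _ ≤ 2 * a (n + k) := Nat.mul_le_mul_left 2 ih
      _ ≤ a (n + (k + 1)) := ha.two_mul_le (n + k)

lemma IsArithmeticSeq.div_le_half_pow (ha : IsArithmeticSeq a) {n m : ℕ} (h : n ≤ m) :
    (a n : ℝ) / a m ≤ (1 / 2) ^ (m - n) := by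
  have hgrow := ha.two_pow_mul_le n (m - n)
  rw [Nat.add_sub_cancel' h] at hgrow
  rw [div_le_iff₀ (by exact_mod_cast ha.pos m), one_div_pow, div_mul_eq_mul_div, one_mul,
    le_div_iff₀ (by positivity), mul_comm]
  exact_mod_cast hgrow

lemma QDivergent.tendsto_qr (ha : IsArithmeticSeq a) {S : Set ℕ} (h : QDivergent a S) :
    Tendsto (qr a) (atTop ⊓ 𝓟 S) atTop := by
  have hqr : qr a = fun n => ((a n / a (n - 1) : ℕ) : ℝ) := funext fun n =>
    (Nat.cast_div (ha.dvd (n.sub_le 1)) (by exact_mod_cast (ha.pos (n - 1)).ne')).symm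
  rw [hqr]
  exact tendsto_natCast_atTop_iff.mpr h

lemma IsCanonicalRep.succ_div_le (hc : IsCanonicalRep a c) (ha : IsArithmeticSeq a) {m : ℕ}
    (hm : 1 ≤ m) : ((c m : ℝ) + 1) / a m ≤ 1 / a (m - 1) := by
  have hdigit : (c m + 1) * a (m - 1) ≤ a m :=
    calc (c m + 1) * a (m - 1) ≤ a m / a (m - 1) * a (m - 1) :=
          Nat.mul_le_mul_right _ (hc.2.1 m hm)
      _ = a m := Nat.div_mul_cancel (ha.dvd (m.sub_le 1))
  rw [div_le_div_iff₀ (by exact_mod_cast ha.pos m) (by exact_mod_cast ha.pos (m - 1)), one_mul]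
  exact_mod_cast hdigit

noncomputable def reprTail (a c : ℕ → ℕ) (n : ℕ) : ℝ :=
  ∑' k, (c (k + (n + 1)) : ℝ) / a (k + (n + 1))

lemma reprTail_nonneg (n : ℕ) : 0 ≤ reprTail a c n :=
  tsum_nonneg fun _ => by positivity

lemma sum_range_digits_le (ha : IsArithmeticSeq a) (hc : IsCanonicalRep a c) (n N : ℕ) :
    ∑ i ∈ Finset.range N, (c (i + (n + 1)) : ℝ) / a (i + (n + 1)) ≤ 1 / a n - 1 / a (n + N) :=
  calc ∑ i ∈ Finset.range N, (c (i + (n + 1)) : ℝ) / a (i + (n + 1))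
      ≤ ∑ i ∈ Finset.range N, (1 / (a (n + i) : ℝ) - 1 / a (n + (i + 1))) := by
        refine Finset.sum_le_sum fun i _ => ?_
        have h := hc.succ_div_le ha (m := n + (i + 1)) (by omega)
        rw [show n + (i + 1) - 1 = n + i by omega, add_div] at h
        rw [show i + (n + 1) = n + (i + 1) by omega]
        linarith
    _ = 1 / a n - 1 / a (n + N) := by
        rw [Finset.sum_range_sub' (fun i => 1 / (a (n + i) : ℝ)), add_zero]

lemma summable_digits_tail (ha : IsArithmeticSeq a) (hc : IsCanonicalRep a c) (n : ℕ) :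
    Summable fun k => (c (k + (n + 1)) : ℝ) / a (k + (n + 1)) :=
  summable_of_sum_range_le (fun _ => by positivity) fun N =>
    (sum_range_digits_le ha hc n N).trans (sub_le_self _ (by positivity))

lemma reprTail_le (ha : IsArithmeticSeq a) (hc : IsCanonicalRep a c) (n : ℕ) :
    reprTail a c n ≤ 1 / a n :=
  Real.tsum_le_of_sum_range_le (fun _ => by positivity) fun N =>
    (sum_range_digits_le ha hc n N).trans (sub_le_self _ (by positivity))

lemma reprTail_eq_add (ha : IsArithmeticSeq a) (hc : IsCanonicalRep a c) (n : ℕ) :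
    reprTail a c n = c (n + 1) / a (n + 1) + reprTail a c (n + 1) := by
  rw [reprTail, (summable_digits_tail ha hc n).tsum_eq_zero_add, zero_add, reprTail]
  congr 2 with k
  rw [add_assoc, add_comm 1]

lemma reprTail_eq_of_gap (ha : IsArithmeticSeq a) (hc : IsCanonicalRep a c) {n m : ℕ}
    (hnm : n < m) (hgap : ∀ k, n < k → k < m → c k = 0) :
    reprTail a c n = c m / a m + reprTail a c m := by
  induction m, hnm using Nat.le_induction with
  | base => exact reprTail_eq_add ha hc n
  | succ m hnm ih =>
    rw [ih fun k hnk hkm => hgap k hnk (hkm.trans m.lt_succ_self), hgap m hnm m.lt_succ_self,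
      Nat.cast_zero, zero_div, zero_add, reprTail_eq_add ha hc m]

lemma exists_mem_suppRep_reprTail_le (ha : IsArithmeticSeq a) (hc : IsCanonicalRep a c) {n : ℕ}
    (h : 0 < reprTail a c n) :
    ∃ m, n < m ∧ m ∈ suppRep c ∧ reprTail a c n ≤ (c m + 1) / a m := by
  classical
  have hex : ∃ m, n < m ∧ c m ≠ 0 := by
    by_contra! hzero
    have hterm : ∀ k, (c (k + (n + 1)) : ℝ) / a (k + (n + 1)) = 0 := fun k => by
      rw [hzero _ (by omega), Nat.cast_zero, zero_div]
    exact h.ne' (by simp only [reprTail, hterm, tsum_zero])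
  obtain ⟨hnm, hcm⟩ := Nat.find_spec hex
  refine ⟨Nat.find hex, hnm, ⟨by omega, hcm⟩, ?_⟩
  have hgap : ∀ k, n < k → k < Nat.find hex → c k = 0 := fun k hnk hkm => by
    by_contra hck
    exact Nat.find_min hex hkm ⟨hnk, hck⟩
  rw [reprTail_eq_of_gap ha hc hnm hgap, add_div]
  linarith [reprTail_le ha hc (Nat.find hex), one_div (a (Nat.find hex) : ℝ)]

lemma nsmul_coe_tsum_digits (ha : IsArithmeticSeq a) (hc : IsCanonicalRep a c) (n : ℕ) :
    a n • ((∑' k, (c k : ℝ) / a k : ℝ) : AddCircle (1 : ℝ))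
      = ((a n * reprTail a c n : ℝ) : AddCircle (1 : ℝ)) := by
  have hsum : Summable fun k => (c k : ℝ) / a k :=
    (summable_nat_add_iff 1).mp (summable_digits_tail ha hc 0)
  have hint : (a n : ℝ) * ∑ k ∈ Finset.range (n + 1), (c k : ℝ) / a k
      = ((∑ k ∈ Finset.range (n + 1), c k * (a n / a k) : ℕ) : ℝ) := by
    rw [Finset.mul_sum, Nat.cast_sum]
    refine Finset.sum_congr rfl fun k hk => ?_
    have hak : (a k : ℝ) ≠ 0 := by exact_mod_cast (ha.pos k).ne'
    rw [Nat.cast_mul, Nat.cast_div (ha.dvd (Finset.mem_range_succ_iff.mp hk)) hak]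
    field_simp
  rw [← hsum.sum_add_tsum_nat_add (n + 1), ← AddCircle.coe_nsmul, nsmul_eq_mul, mul_add, hint,
    AddCircle.coe_add, ← nsmul_one, AddCircle.coe_nsmul, AddCircle.coe_period, nsmul_zero,
    zero_add]
  rfl

lemma exists_mem_suppRep_of_le_mul_reprTail (ha : IsArithmeticSeq a) (hc : IsCanonicalRep a c)
    {n : ℕ} {ε : ℝ} (hε : 0 < ε) (h : ε ≤ a n * reprTail a c n) :
    ∃ m, n < m ∧ m ∈ suppRep c ∧ ε ≤ (1 / 2) ^ (m - 1 - n) ∧ ε ≤ (c m + 1) / qr a m := by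
  have htail : 0 < reprTail a c n := pos_of_mul_pos_right (hε.trans_le h) (Nat.cast_nonneg _)
  obtain ⟨m, hnm, hm, hle⟩ := exists_mem_suppRep_reprTail_le ha hc htail
  have hT : ε ≤ a n * ((c m + 1) / a m) := h.trans (by gcongr)
  refine ⟨m, hnm, hm, ?_, ?_⟩
  · calc ε ≤ a n * (1 / a (m - 1)) := hT.trans
          (mul_le_mul_of_nonneg_left (hc.succ_div_le ha (by omega)) (Nat.cast_nonneg _))
      _ = a n / a (m - 1) := mul_one_div _ _
      _ ≤ (1 / 2) ^ (m - 1 - n) := ha.div_le_half_pow (by omega)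
  · have hnm' : (a n : ℝ) ≤ a (m - 1) := by exact_mod_cast ha.2.1.monotone (by omega)
    have ham : (a m : ℝ) ≠ 0 := by exact_mod_cast (ha.pos m).ne'
    have ham' : (a (m - 1) : ℝ) ≠ 0 := by exact_mod_cast (ha.pos (m - 1)).ne'
    calc ε ≤ a (m - 1) * ((c m + 1) / a m) := hT.trans (by gcongr)
      _ = (c m + 1) / qr a m := by rw [qr]; field_simp

end Representation

/-- If `supp(x)` is `q`-divergent and `c_n/q_n → 0` in `ℝ` along some
`A ⊆ supp(x)` with `d(supp(x) \ A) = 0`, then `x` is a topological `s`-torsion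
element of `𝕋`. -/
theorem sTorsion_of_qDivergent_cq_small (a c : ℕ → ℕ) (ha : IsArithmeticSeq a)
    (hc : IsCanonicalRep a c) (x : AddCircle (1 : ℝ))
    (hx : x = ((∑' n, (c n : ℝ) / (a n : ℝ) : ℝ) : AddCircle (1 : ℝ)))
    (hqd : QDivergent a (suppRep c))
    (A : Set ℕ) (hAsupp : A ⊆ suppRep c) (hd : HasDensity (suppRep c \ A) 0)
    (hlim : Filter.Tendsto (fun n => (c n : ℝ) / qr a n)
      (Filter.atTop ⊓ Filter.principal A) (nhds 0)) :
    StatNhdTendsto (fun n => a n • x) (0 : AddCircle (1 : ℝ)) := by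
  intro U hU
  obtain ⟨ε, hε, hball⟩ := Metric.mem_nhds_iff.mp hU
  obtain ⟨K, hK⟩ := exists_pow_lt_of_lt_one hε (by norm_num : (1 / 2 : ℝ) < 1)
  have hqA : Tendsto (qr a) (atTop ⊓ 𝓟 A) atTop :=
    (hqd.tendsto_qr ha).mono_left (inf_le_inf_left _ (principal_mono.mpr hAsupp))
  have hsmall : Tendsto (fun m => ((c m : ℝ) + 1) / qr a m) (atTop ⊓ 𝓟 A) (𝓝 0) := by
    simpa only [add_div, one_div, add_zero, Function.comp_def] using hlim.add (tendsto_inv_atTop_zero.comp hqA)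
  obtain ⟨N, hN⟩ :=
    eventually_atTop.mp (eventually_inf_principal.mp (hsmall.eventually_lt_const hε))
  refine hd.zero_of_eventually_exists_add_mem K ?_
  filter_upwards [eventually_ge_atTop N] with n hn hnU
  have hT : ε ≤ a n * reprTail a c n := by
    by_contra! hlt
    refine hnU (hball ?_)
    rw [Metric.mem_ball, dist_zero_right, hx, nsmul_coe_tsum_digits ha hc]
    refine QuotientAddGroup.norm_mk_le_norm.trans_lt ?_
    rwa [Real.norm_of_nonneg (mul_nonneg (Nat.cast_nonneg _) (reprTail_nonneg n))]
  obtain ⟨m, hnm, hm, hgeo, hq⟩ := exists_mem_suppRep_of_le_mul_reprTail ha hc hε hT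
  have hmK : m - 1 - n < K :=
    (pow_lt_pow_iff_right_of_lt_one₀ (by norm_num) (by norm_num)).mp (hK.trans_le hgeo)
  have hmA : m ∉ A := fun hmA => (hN m (by omega) hmA).not_ge hq
  exact ⟨m - n, by omega, by rw [Nat.add_sub_cancel' hnm.le]; exact ⟨hm, hmA⟩⟩
end

section
/- Let (a_n) be an arithmetic sequence with ratios q_n and x ∈ 𝕋 with canonical representation x = Σ c_n/a_n. Suppose supp(x) has positive upper natural density, is q-divergent, and there exist 0 < r₁ ≤ r₂ < 1 such that c_n/q_n ∈ [r₁, r₂] for all n ∈ supp(x). Then x is not a topological s-torsion element of 𝕋 (i.e., a_n x does not converge to 0 statistically). -/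
open Filter Topology Set

/-!
For `n ∈ supp(x)`, the terms `c k / a k` with `k < n` contribute integers to `a (n-1) x`, so
`a (n-1) x ≡ a (n-1) ∑_{k ≥ n} c k / a k (mod 1)`. The canonical-representation bound
`c k / a k ≤ 1 / a (k-1) - 1 / a k` telescopes the tail beyond `n` to at most `1 / a n`, which
places this real number in `[c n / q n, (c n + 1) / q n] ⊆ [r₁, r₂ + 1 / q n]`. By `q`-divergence
`1 / q n ≤ (1 - r₂) / 2` eventually on `supp(x)`, so `a (n-1) x` stays outside a fixed
neighbourhood of `0`. Hence `supp(x) - 1` is eventually contained in a set of density zero,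
contradicting its positive upper density.
-/

namespace IsArithmeticSeq

variable {a : ℕ → ℕ}

lemma pos_s18 (ha : IsArithmeticSeq a) (n : ℕ) : 0 < a n :=
  Nat.lt_of_lt_of_le Nat.one_pos (ha.1 ▸ ha.2.1.monotone n.zero_le)

lemma dvd_of_le (ha : IsArithmeticSeq a) {m n : ℕ} (h : m ≤ n) : a m ∣ a n := by
  induction n, h using Nat.le_induction with
  | base => exact dvd_rfl
  | succ k _ ih => exact ih.trans (ha.2.2 k)

lemma nsmul_coe_sum_range_eq_zero (ha : IsArithmeticSeq a) (c : ℕ → ℕ) (m : ℕ) :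
    a m • (((∑ k ∈ Finset.range (m + 1), (c k : ℝ) / a k : ℝ)) : AddCircle (1 : ℝ)) = 0 := by
  have hint : (a m : ℝ) * ∑ k ∈ Finset.range (m + 1), (c k : ℝ) / a k
      = ((∑ k ∈ Finset.range (m + 1), c k * (a m / a k) : ℕ) : ℝ) := by
    rw [Nat.cast_sum, Finset.mul_sum]
    refine Finset.sum_congr rfl fun k hk => ?_
    have hk : a k ∣ a m := ha.dvd_of_le (Nat.lt_succ_iff.1 (Finset.mem_range.1 hk))
    rw [Nat.cast_mul, Nat.cast_div hk (Nat.cast_ne_zero.2 (ha.pos_s18 k).ne')]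
    ring
  rw [← AddCircle.coe_nsmul, nsmul_eq_mul, hint, AddCircle.coe_eq_zero_iff]
  exact ⟨_, (zsmul_one _).trans (Int.cast_natCast _)⟩

end IsArithmeticSeq

namespace IsCanonicalRep

variable {a c : ℕ → ℕ}

lemma div_le_inv_sub_inv (hc : IsCanonicalRep a c) (ha : IsArithmeticSeq a) (n : ℕ) :
    (c (n + 1) : ℝ) / a (n + 1) ≤ 1 / a n - 1 / a (n + 1) := by
  have h : (c (n + 1) + 1) * a n ≤ a (n + 1) :=
    (Nat.le_div_iff_mul_le (ha.pos_s18 n)).1 (hc.2.1 (n + 1) n.succ_pos)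
  have h₀ : (0 : ℝ) < a n := by exact_mod_cast ha.pos_s18 n
  have h₁ : (0 : ℝ) < a (n + 1) := by exact_mod_cast ha.pos_s18 (n + 1)
  rw [div_sub_div _ _ h₀.ne' h₁.ne', div_le_div_iff₀ h₁ (by positivity)]
  have h' : ((c (n + 1) : ℝ) + 1) * a n ≤ a (n + 1) := by exact_mod_cast h
  nlinarith

lemma sum_range_tail_le (hc : IsCanonicalRep a c) (ha : IsArithmeticSeq a) (n m : ℕ) :
    ∑ k ∈ Finset.range m, (c (k + (n + 1)) : ℝ) / a (k + (n + 1)) ≤ 1 / a n :=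
  calc ∑ k ∈ Finset.range m, (c (k + (n + 1)) : ℝ) / a (k + (n + 1))
      ≤ ∑ k ∈ Finset.range m, (1 / (a (k + n) : ℝ) - 1 / a (k + 1 + n)) :=
        Finset.sum_le_sum fun k _ => by
          rw [Nat.add_right_comm k 1 n]
          exact hc.div_le_inv_sub_inv ha (k + n)
    _ = 1 / a n - 1 / a (m + n) := by
        rw [Finset.sum_range_sub' (fun k => 1 / (a (k + n) : ℝ)), zero_add]
    _ ≤ 1 / a n := sub_le_self _ (by positivity)

lemma summable (hc : IsCanonicalRep a c) (ha : IsArithmeticSeq a) :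
    Summable fun k => (c k : ℝ) / a k :=
  (summable_nat_add_iff 1).1 <|
    summable_of_sum_range_le (fun _ => by positivity) (hc.sum_range_tail_le ha 0)

lemma tsum_tail_le (hc : IsCanonicalRep a c) (ha : IsArithmeticSeq a) (n : ℕ) :
    ∑' k, (c (k + (n + 1)) : ℝ) / a (k + (n + 1)) ≤ 1 / a n :=
  Real.tsum_le_of_sum_range_le (fun _ => by positivity) (hc.sum_range_tail_le ha n)

lemma nsmul_coe_tsum (hc : IsCanonicalRep a c) (ha : IsArithmeticSeq a) (m : ℕ) :
    a m • ((∑' k, (c k : ℝ) / a k : ℝ) : AddCircle (1 : ℝ))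
      = ((a m * ∑' k, (c (k + (m + 1)) : ℝ) / a (k + (m + 1)) : ℝ) : AddCircle (1 : ℝ)) := by
  rw [← (hc.summable ha).sum_add_tsum_nat_add (m + 1), AddCircle.coe_add, nsmul_add,
    ha.nsmul_coe_sum_range_eq_zero, zero_add, ← AddCircle.coe_nsmul, nsmul_eq_mul]

lemma mul_tsum_tail_mem_Icc (hc : IsCanonicalRep a c) (ha : IsArithmeticSeq a) (m : ℕ) :
    a m * ∑' k, (c (k + (m + 1)) : ℝ) / a (k + (m + 1))
      ∈ Icc ((c (m + 1) : ℝ) / qr a (m + 1)) ((c (m + 1) : ℝ) / qr a (m + 1) + 1 / qr a (m + 1)) := by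
  have hsplit := ((summable_nat_add_iff (m + 1)).2 (hc.summable ha)).tsum_eq_zero_add
  simp only [zero_add] at hsplit
  set R := ∑' k, (c (k + 1 + (m + 1)) : ℝ) / a (k + 1 + (m + 1))
  have hR : R ≤ 1 / a (m + 1) := by
    simp only [R, Nat.add_right_comm _ 1 (m + 1)]
    exact hc.tsum_tail_le ha (m + 1)
  have hR₀ : 0 ≤ R := tsum_nonneg fun _ => by positivity
  have h₀ : (0 : ℝ) < a m := by exact_mod_cast ha.pos_s18 m
  have hq : qr a (m + 1) = a (m + 1) / a m := by simp [qr]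
  have hmul : ∀ t : ℝ, t / qr a (m + 1) = a m * (t / a (m + 1)) := fun t => by
    rw [hq]; field_simp
  rw [hsplit, hmul, hmul, mul_add]
  refine ⟨?_, ?_⟩
  · linarith [mul_nonneg h₀.le hR₀]
  · linarith [mul_le_mul_of_nonneg_left hR h₀.le]

end IsCanonicalRep

lemma le_norm_coe_of_le_of_le {δ y : ℝ} (h₁ : δ ≤ y) (h₂ : y ≤ 1 - δ) :
    δ ≤ ‖(y : AddCircle (1 : ℝ))‖ := by
  rcases lt_or_ge δ 0 with hδ | hδ
  · exact hδ.le.trans (norm_nonneg _)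
  rw [UnitAddCircle.norm_eq]
  rcases le_or_gt (round y) 0 with h | h
  · have : (round y : ℝ) ≤ 0 := by exact_mod_cast h
    exact h₁.trans (by rw [abs_of_nonneg (by linarith)]; linarith)
  · have : (1 : ℝ) ≤ round y := by exact_mod_cast h
    rw [abs_of_nonpos (by linarith)]
    linarith

lemma ncard_inter_Iio_le_of_succ_mem {S B : Set ℕ} {N : ℕ} (hSB : ∀ m ≥ N, m + 1 ∈ S → m ∈ B)
    (n : ℕ) : (S ∩ Iio n).ncard ≤ N + 1 + (B ∩ Iio n).ncard := by
  have hsub : S ∩ Iio n ⊆ Iio (N + 1) ∪ (· + 1) '' (B ∩ Iio n) := by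
    rintro (_ | m) ⟨hS, hn⟩
    · exact Or.inl (Nat.succ_pos N)
    · rcases lt_or_ge m N with hm | hm
      · exact Or.inl (Nat.succ_lt_succ hm)
      · exact Or.inr ⟨m, ⟨hSB m hm hS, Nat.lt_of_succ_lt hn⟩, rfl⟩
  calc (S ∩ Iio n).ncard
      ≤ (Iio (N + 1) ∪ (· + 1) '' (B ∩ Iio n)).ncard :=
        ncard_le_ncard hsub ((finite_Iio _).union (((finite_Iio n).inter_of_right B).image _))
    _ ≤ (Iio (N + 1)).ncard + ((· + 1) '' (B ∩ Iio n)).ncard := ncard_union_le _ _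
    _ ≤ N + 1 + (B ∩ Iio n).ncard := by
        rw [ncard_Iio_nat]
        exact Nat.add_le_add_left (ncard_image_le ((finite_Iio n).inter_of_right B)) _

namespace HasDensity

lemma upperDensity_eq {A : Set ℕ} {δ : ℝ} (h : HasDensity A δ) : upperDensity A = δ :=
  h.limsup_eq

lemma of_eventually_succ_mem {S B : Set ℕ} (hB : HasDensity B 0)
    (hSB : ∀ᶠ m in atTop, m + 1 ∈ S → m ∈ B) : HasDensity S 0 := by
  obtain ⟨N, hN⟩ := eventually_atTop.1 hSB
  have hbound : Tendsto (fun n : ℕ => ((N + 1 : ℕ) : ℝ) / n + (Nat.card ↥(B ∩ Iio n) : ℝ) / n)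
      atTop (𝓝 0) := by
    simpa using (tendsto_const_div_atTop_nhds_zero_nat _).add hB
  refine tendsto_of_tendsto_of_tendsto_of_le_of_le tendsto_const_nhds hbound
    (fun n => by positivity) fun n => ?_
  rw [← add_div, Nat.card_coe_set_eq, Nat.card_coe_set_eq, ← Nat.cast_add]
  gcongr
  exact_mod_cast ncard_inter_Iio_le_of_succ_mem hN n

end HasDensity

lemma QDivergent.eventually_inv_qr_le {a : ℕ → ℕ} {S : Set ℕ} (h : QDivergent a S) {ε : ℝ}
    (hε : 0 < ε) : ∀ᶠ m in atTop, m + 1 ∈ S → 1 / qr a (m + 1) ≤ ε := by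
  have hge := eventually_inf_principal.1 (h.eventually_ge_atTop ⌈1 / ε⌉₊)
  refine ((tendsto_add_atTop_nat 1).eventually hge).mono fun m hm hS => ?_
  have hq : 1 / ε ≤ qr a (m + 1) :=
    calc 1 / ε ≤ ⌈1 / ε⌉₊ := Nat.le_ceil _
      _ ≤ ((a (m + 1) / a (m + 1 - 1) : ℕ) : ℝ) := by exact_mod_cast hm hS
      _ ≤ qr a (m + 1) := Nat.cast_div_le
  simpa using one_div_le_one_div_of_le (by positivity) hq

theorem not_sTorsion_of_cq_bounded_away_general (a c : ℕ → ℕ) (ha : IsArithmeticSeq a)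
    (hc : IsCanonicalRep a c) (x : AddCircle (1 : ℝ))
    (hx : x = ((∑' n, (c n : ℝ) / (a n : ℝ) : ℝ) : AddCircle (1 : ℝ)))
    (hpos : 0 < upperDensity (suppRep c)) (hqd : QDivergent a (suppRep c))
    (r₁ r₂ : ℝ) (hr₁ : 0 < r₁) (hr₂ : r₂ < 1)
    (hcq : ∀ n ∈ suppRep c, r₁ ≤ (c n : ℝ) / qr a n ∧ (c n : ℝ) / qr a n ≤ r₂) :
    ¬ StatNhdTendsto (fun n => a n • x) (0 : AddCircle (1 : ℝ)) := by
  intro hstat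
  set δ := min r₁ ((1 - r₂) / 2)
  have hB := hstat _ (Metric.ball_mem_nhds 0 (lt_min hr₁ (by linarith) : 0 < δ))
  have hsupp : HasDensity (suppRep c) 0 := hB.of_eventually_succ_mem <|
    (hqd.eventually_inv_qr_le (by linarith : 0 < (1 - r₂) / 2)).mono fun m hq hS => by
      obtain ⟨hlo, hhi⟩ := hc.mul_tsum_tail_mem_Icc ha m
      obtain ⟨hr₁c, hcr₂⟩ := hcq _ hS
      have hδ₁ : δ ≤ r₁ := min_le_left _ _
      have hδ₂ : δ ≤ (1 - r₂) / 2 := min_le_right _ _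
      simp only [mem_ofPred_eq, Metric.mem_ball, dist_zero_right, not_lt, hx,
        hc.nsmul_coe_tsum ha]
      exact le_norm_coe_of_le_of_le (by linarith) (by linarith [hq hS])
  exact hpos.ne' hsupp.upperDensity_eq

/-- If `supp(x)` has positive upper density, is `q`-divergent, and
`c_n/q_n ∈ [r₁, r₂] ⊆ (0,1)` on `supp(x)`, then `x` is not a topological
`s`-torsion element of `𝕋`. -/
theorem not_sTorsion_of_cq_bounded_away (a c : ℕ → ℕ) (ha : IsArithmeticSeq a)
    (hc : IsCanonicalRep a c) (x : AddCircle (1 : ℝ))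
    (hx : x = ((∑' n, (c n : ℝ) / (a n : ℝ) : ℝ) : AddCircle (1 : ℝ)))
    (hpos : 0 < upperDensity (suppRep c)) (hqd : QDivergent a (suppRep c))
    (r₁ r₂ : ℝ) (hr₁ : 0 < r₁) (hr₁₂ : r₁ ≤ r₂) (hr₂ : r₂ < 1)
    (hcq : ∀ n ∈ suppRep c, r₁ ≤ (c n : ℝ) / qr a n ∧ (c n : ℝ) / qr a n ≤ r₂) :
    ¬ StatNhdTendsto (fun n => a n • x) (0 : AddCircle (1 : ℝ)) :=
  not_sTorsion_of_cq_bounded_away_general a c ha hc x hx hpos hqd r₁ r₂ hr₁ hr₂ hcq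
end
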